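/- arXiv:2212.02768 — 7 statements merged into one kernel-verified Lean document; each statement's English description precedes it below -/
import Mathlib

section
/- Let n ≥ 3 and let Φ be a uniformly random proper 3-coloring of the n-node cycle. For any two vertices at distance d (where 1 ≤ d ≤ n-1), the probability that Φ assigns them the same color equals (2^d + 2(-1)^d)(2^{n-d} + 2(-1)^{n-d}) / (3(2^n + 2(-1)^n)). -/
/-!
Colour the cycle by an abelian group `G`. A colouring `φ` is determined by `φ u` and its forward
differences `Δ_[1] φ`, which range over all functions with sum zero; `φ` is proper iff these
differences never vanish, and `φ u = φ (u + d)` iff the `d` differences along the arc from `u` to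
`u + d` sum to zero, hence so do the other `n - d`. So the number of proper colourings with
`φ u = φ (u + d)` is `|G| a_d a_{n-d}`, where `a_m` counts nowhere-zero words of length `m` with sum
zero; `d = 0` gives the total. Deleting the last letter shows `a_{m+1} + a_m = (|G| - 1)^m`, whence
`|G| a_m = (|G| - 1)^m + (|G| - 1)(-1)^m`.
-/

open Finset fwdDiff

section ZeroSum

variable (G : Type*) [AddCommGroup G] [Fintype G] [DecidableEq G]

def nonzeroZeroSumCount (m : ℕ) : ℕ := #{s : Fin m → G | (∀ i, s i ≠ 0) ∧ ∑ i, s i = 0}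

lemma card_filter_forall_ne_zero (m : ℕ) :
    #{s : Fin m → G | ∀ i, s i ≠ 0} = (Fintype.card G - 1) ^ m := by
  have : ({s : Fin m → G | ∀ i, s i ≠ 0} : Finset _) = Fintype.piFinset fun _ => {0}ᶜ := by
    ext s; simp
  rw [this, Fintype.card_piFinset, prod_const, card_compl, card_singleton, card_univ,
    Fintype.card_fin]

lemma nonzeroZeroSumCount_succ_add (m : ℕ) :
    nonzeroZeroSumCount G (m + 1) + nonzeroZeroSumCount G m = (Fintype.card G - 1) ^ m := by
  -- drop the last letter, which is minus the sum of the others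
  have hsucc : nonzeroZeroSumCount G (m + 1) =
      #{s : Fin m → G | (∀ i, s i ≠ 0) ∧ ∑ i, s i ≠ 0} := by
    apply card_nbij' Fin.init (fun t => Fin.snoc t (-∑ i, t i))
    · intro s hs
      simp only [coe_filter, mem_univ, true_and, Set.mem_ofPred_eq] at hs ⊢
      rw [Fin.sum_univ_castSucc, add_eq_zero_iff_eq_neg] at hs
      exact ⟨fun i => hs.1 _, fun h => hs.1 (Fin.last m) (by rw [← neg_eq_zero, ← hs.2]; exact h)⟩
    · intro t ht
      simp only [coe_filter, mem_univ, true_and, Set.mem_ofPred_eq] at ht ⊢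
      refine ⟨Fin.lastCases (by simpa using ht.2) (by simpa using ht.1), ?_⟩
      simp [Fin.sum_univ_castSucc]
    · intro s hs
      simp only [coe_filter, mem_univ, true_and, Set.mem_ofPred_eq] at hs
      rw [Fin.sum_univ_castSucc, add_eq_zero_iff_neg_eq] at hs
      conv_rhs => rw [← Fin.snoc_init_self s]
      simp only [Fin.init, hs.2]
    · intro t _
      simp
  rw [hsucc, nonzeroZeroSumCount, ← card_filter_forall_ne_zero, ← filter_filter, ← filter_filter,
    add_comm]
  exact card_filter_add_card_filter_not _

lemma card_mul_nonzeroZeroSumCount (m : ℕ) :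
    (Fintype.card G : ℤ) * nonzeroZeroSumCount G m
      = ((Fintype.card G : ℤ) - 1) ^ m + ((Fintype.card G : ℤ) - 1) * (-1) ^ m := by
  induction m with
  | zero =>
    have : nonzeroZeroSumCount G 0 = 1 := by simp [nonzeroZeroSumCount]
    simp [this]
  | succ m ih =>
    have hrec : (nonzeroZeroSumCount G (m + 1) : ℤ) = ((Fintype.card G : ℤ) - 1) ^ m
        - nonzeroZeroSumCount G m := by
      have h := congrArg (Nat.cast : ℕ → ℤ) (nonzeroZeroSumCount_succ_add G m)
      push_cast [Nat.cast_sub (Fintype.card_pos : 1 ≤ Fintype.card G)] at h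
      rw [← h, add_sub_cancel_right]
    rw [hrec]
    linear_combination (-1 : ℤ) * ih

end ZeroSum

section Cycle

variable {G : Type*} [AddCommGroup G]

lemma sum_range_fwdDiff_one {M : Type*} [AddCommMonoidWithOne M] (f : M → G) (u : M) (k : ℕ) :
    ∑ i ∈ range k, Δ_[1] f (u + i) = f (u + k) - f u := by
  simpa [fwdDiff, add_assoc] using sum_range_sub (fun i : ℕ => f (u + i)) k

lemma sum_fwdDiff {M : Type*} [AddCommGroup M] [Fintype M] (h : M) (f : M → G) :
    ∑ x, Δ_[h] f x = 0 := by
  simp only [fwdDiff, sum_sub_distrib, sub_eq_zero]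
  exact Fintype.sum_equiv (Equiv.addRight h) _ _ fun _ => rfl

variable {N : ℕ} [NeZero N]

@[simps]
def ZMod.natCastAddEquiv (u : ZMod N) : Fin N ≃ ZMod N where
  toFun i := u + (i : ℕ)
  invFun v := ⟨(v - u).val, ZMod.val_lt _⟩
  left_inv i := Fin.ext (by simp [ZMod.val_cast_of_lt i.2])
  right_inv v := by simp

lemma ZMod.sum_range_natCast_add {M : Type*} [AddCommMonoid M] (f : ZMod N → M) (u : ZMod N) :
    ∑ i ∈ range N, f (u + i) = ∑ v, f v := by
  rw [sum_range]
  exact (ZMod.natCastAddEquiv u).sum_comp f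

def cycleIntegral (u : ZMod N) (c : G) (δ : ZMod N → G) (v : ZMod N) : G :=
  c + ∑ i ∈ range (v - u).val, δ (u + i)

lemma cycleIntegral_add_natCast {δ : ZMod N → G} (hδ : ∑ v, δ v = 0) (u : ZMod N) (c : G)
    (k : ℕ) : cycleIntegral u c δ (u + k) = c + ∑ i ∈ range k, δ (u + i) := by
  induction k using Nat.strong_induction_on with
  | _ k ih =>
  by_cases hk : k < N
  · simp [cycleIntegral, ZMod.val_cast_of_lt hk]
  · -- a full turn around the cycle contributes `∑ v, δ v = 0`
    obtain ⟨j, rfl⟩ : ∃ j, k = N + j := ⟨k - N, by omega⟩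
    have hshift : ∀ i : ℕ, u + ((N + i : ℕ) : ZMod N) = u + i := by simp
    rw [sum_range_add, ZMod.sum_range_natCast_add, hδ, zero_add, hshift]
    simp_rw [hshift]
    exact ih j (by have := NeZero.pos N; omega)

lemma fwdDiff_cycleIntegral {δ : ZMod N → G} (hδ : ∑ v, δ v = 0) (u : ZMod N) (c : G) :
    Δ_[1] (cycleIntegral u c δ) = δ := by
  funext v
  obtain ⟨k, rfl⟩ : ∃ k : ℕ, v = u + k := ⟨(v - u).val, by simp⟩
  rw [fwdDiff, add_assoc, ← Nat.cast_add_one, cycleIntegral_add_natCast hδ,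
    cycleIntegral_add_natCast hδ, sum_range_succ, add_sub_add_left_eq_sub, add_sub_cancel_left]

lemma cycleIntegral_fwdDiff (φ : ZMod N → G) (u : ZMod N) :
    cycleIntegral u (φ u) (Δ_[1] φ) = φ := by
  funext v
  simp [cycleIntegral, sum_range_fwdDiff_one]

lemma card_filter_fwdDiff [Fintype G] [DecidableEq G] (P : (ZMod N → G) → Prop)
    [DecidablePred P] :
    #{φ : ZMod N → G | P (Δ_[1] φ)} = Fintype.card G * #{δ : ZMod N → G | ∑ v, δ v = 0 ∧ P δ} := by
  rw [← card_univ, ← card_product]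
  apply card_nbij' (fun φ => (φ 0, Δ_[1] φ)) (fun p => cycleIntegral 0 p.1 p.2)
  · intro φ hφ
    simp_all [sum_fwdDiff]
  · intro p hp
    simp_all [fwdDiff_cycleIntegral]
  · intro φ _
    exact cycleIntegral_fwdDiff φ 0
  · intro p hp
    rw [mem_coe, mem_product, mem_filter] at hp
    exact Prod.ext (by simp [cycleIntegral]) (fwdDiff_cycleIntegral hp.2.2.1 0 p.1)

lemma card_filter_sum_range_eq_zero [Fintype G] [DecidableEq G] (u : ZMod N) {d : ℕ}
    (hd : d ≤ N) :
    #{δ : ZMod N → G | ∑ v, δ v = 0 ∧ (∀ v, δ v ≠ 0) ∧ ∑ i ∈ range d, δ (u + i) = 0}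
      = nonzeroZeroSumCount G d * nonzeroZeroSumCount G (N - d) := by
  obtain ⟨e, rfl⟩ : ∃ e, N = d + e := ⟨N - d, by omega⟩
  rw [Nat.add_sub_cancel_left, nonzeroZeroSumCount, nonzeroZeroSumCount, ← card_product]
  refine card_equiv (((ZMod.natCastAddEquiv u).arrowCongr (Equiv.refl G)).symm.trans
    (Fin.appendEquiv d e).symm) fun δ => ?_
  simp only [mem_filter, mem_univ, true_and, mem_product, Equiv.trans_apply,
    Fin.appendEquiv_symm_apply, Equiv.arrowCongr_symm, Equiv.arrowCongr_apply, Equiv.symm_symm,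
    Function.comp_apply, Equiv.refl_symm, Equiv.coe_refl, id]
  rw [← (ZMod.natCastAddEquiv u).forall_congr_right, ← (ZMod.natCastAddEquiv u).sum_comp,
    sum_range, Fin.sum_univ_add, Fin.forall_fin_add]
  simp only [ZMod.natCastAddEquiv_apply, Fin.val_castAdd, Fin.val_natAdd]
  constructor
  · rintro ⟨hsum, ⟨hnzd, hnze⟩, hsumd⟩
    exact ⟨⟨hnzd, hsumd⟩, hnze, by rwa [hsumd, zero_add] at hsum⟩
  · rintro ⟨⟨hnzd, hsumd⟩, hnze, hsume⟩
    exact ⟨by rw [hsumd, hsume, add_zero], ⟨hnzd, hnze⟩, hsumd⟩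

lemma card_filter_proper_and_eq [Fintype G] [DecidableEq G] (u : ZMod N) {d : ℕ} (hd : d ≤ N) :
    #{φ : ZMod N → G | (∀ v, φ v ≠ φ (v + 1)) ∧ φ u = φ (u + d)}
      = Fintype.card G * (nonzeroZeroSumCount G d * nonzeroZeroSumCount G (N - d)) := by
  rw [← card_filter_sum_range_eq_zero u hd, ← card_filter_fwdDiff]
  congr 1
  refine filter_congr fun φ _ => and_congr (forall_congr' fun v => ?_) ?_
  · rw [fwdDiff, sub_ne_zero, ne_comm]
  · rw [sum_range_fwdDiff_one, sub_eq_zero, eq_comm]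

lemma card_filter_proper [Fintype G] [DecidableEq G] :
    #{φ : ZMod N → G | ∀ v, φ v ≠ φ (v + 1)} = Fintype.card G * nonzeroZeroSumCount G N := by
  simpa [nonzeroZeroSumCount] using card_filter_proper_and_eq (G := G) (0 : ZMod N) N.zero_le

end Cycle

theorem uniform_cycle_same_color_prob_general (n : ℕ) [NeZero n]
    (d : ℕ) (hd2 : d ≤ n - 1) (u : ZMod n) :
    ((Finset.univ.filter (fun φ : ZMod n → Fin 3 =>
        (∀ v : ZMod n, φ v ≠ φ (v + 1)) ∧ φ u = φ (u + (d : ZMod n)))).card : ℚ)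
      / ((Finset.univ.filter (fun φ : ZMod n → Fin 3 =>
        ∀ v : ZMod n, φ v ≠ φ (v + 1))).card : ℚ)
    = ((2 : ℚ) ^ d + 2 * (-1) ^ d) * ((2 : ℚ) ^ (n - d) + 2 * (-1) ^ (n - d))
      / (3 * ((2 : ℚ) ^ n + 2 * (-1) ^ n)) := by
  have hcount (m : ℕ) : 3 * (nonzeroZeroSumCount (Fin 3) m : ℚ) = 2 ^ m + 2 * (-1) ^ m := by
    have h := card_mul_nonzeroZeroSumCount (Fin 3) m
    norm_num at h
    exact_mod_cast h
  rw [card_filter_proper_and_eq u (by omega : d ≤ n), card_filter_proper, ← hcount d,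
    ← hcount (n - d), ← hcount n, mul_mul_mul_comm, mul_assoc, mul_div_mul_left _ _ three_ne_zero,
    Fintype.card_fin]
  norm_cast

/-- under the uniform distribution on proper 3-colorings of the n-cycle,
the probability that two vertices at (directed) distance d share a color equals
(2^d + 2(-1)^d)(2^{n-d} + 2(-1)^{n-d}) / (3(2^n + 2(-1)^n)). -/
theorem uniform_cycle_same_color_prob (n : ℕ) [NeZero n] (hn : 3 ≤ n)
    (d : ℕ) (hd1 : 1 ≤ d) (hd2 : d ≤ n - 1) (u : ZMod n) :
    ((Finset.univ.filter (fun φ : ZMod n → Fin 3 =>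
        (∀ v : ZMod n, φ v ≠ φ (v + 1)) ∧ φ u = φ (u + (d : ZMod n)))).card : ℚ)
      / ((Finset.univ.filter (fun φ : ZMod n → Fin 3 =>
        ∀ v : ZMod n, φ v ≠ φ (v + 1))).card : ℚ)
    = ((2 : ℚ) ^ d + 2 * (-1) ^ d) * ((2 : ℚ) ^ (n - d) + 2 * (-1) ^ (n - d))
      / (3 * ((2 : ℚ) ^ n + 2 * (-1) ^ n)) :=
  uniform_cycle_same_color_prob_general n d hd2 u
end

section
/- The function f(d) = (2^d + 2(-1)^d)(2^{n-d} + 2(-1)^{n-d}) / (3(2^n + 2(-1)^n)), defined for d ∈ {1, 2, ..., ⌊n/2⌋}, is injective for every n ≥ 3. Consequently, in a uniformly random proper 3-coloring of the n-cycle, the probability that two vertices share a color determines their distance. -/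
/-!
The numerator of `f d` is `P d * P (n - d)`, where `P d = cycleChromatic d = 2 ^ d + 2 (-1) ^ d`
counts the proper 3-colourings of a `d`-cycle. For `a < b ≤ n / 2` put `k = b - a` and `m = n - a - b`, both
positive. The identity
`P a P (a + k + m) - P (a + k) P (a + m) = 2 (-2) ^ a (2 ^ k - (-1) ^ k) (2 ^ m - (-1) ^ m)`
shows that the numerators at `a` and `b` differ, because `2 ^ j ≠ (-1) ^ j` for `j > 0`.
-/

lemma pow_add_mul_pow_add_sub_pow_add_mul_pow_add {R : Type*} [CommRing R] (x y c : R)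
    (a k m : ℕ) :
    (x ^ a + c * y ^ a) * (x ^ (a + k + m) + c * y ^ (a + k + m))
      - (x ^ (a + k) + c * y ^ (a + k)) * (x ^ (a + m) + c * y ^ (a + m))
      = c * (x * y) ^ a * (x ^ k - y ^ k) * (x ^ m - y ^ m) := by
  ring

lemma two_pow_ne_neg_one_pow {R : Type*} [Ring R] [LinearOrder R] [IsStrictOrderedRing R]
    {k : ℕ} (hk : k ≠ 0) : (2 : R) ^ k ≠ (-1) ^ k := by
  intro h
  have h_abs := congrArg abs h
  rw [abs_neg_one_pow, abs_of_pos (by positivity)] at h_abs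
  exact (one_lt_pow₀ one_lt_two hk).ne' h_abs

abbrev cycleChromatic (n : ℕ) : ℚ := 2 ^ n + 2 * (-1) ^ n

lemma cycleChromatic_ne_zero {n : ℕ} (hn : n ≠ 1) : cycleChromatic n ≠ 0 := by
  intro h
  have h_abs := congrArg abs (eq_neg_of_add_eq_zero_left h)
  rw [abs_neg, abs_mul, abs_neg_one_pow, abs_two, mul_one, abs_of_pos (by positivity),
    ← pow_one 2] at h_abs
  exact hn (pow_right_injective₀ two_pos (by norm_num) h_abs)

lemma cycleChromatic_mul_ne_of_lt {n a b : ℕ} (hab : a < b) (hb : b ≤ n / 2) :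
    cycleChromatic a * cycleChromatic (n - a) ≠ cycleChromatic b * cycleChromatic (n - b) := by
  obtain ⟨k, rfl⟩ := Nat.exists_eq_add_of_lt hab
  obtain ⟨m, hm⟩ : ∃ m, n = a + (a + k + 1) + m + 1 := Nat.exists_eq_add_of_lt (by omega)
  have h_na : n - a = a + (k + 1) + (m + 1) := by omega
  have h_nb : n - (a + k + 1) = a + (m + 1) := by omega
  rw [h_na, h_nb, ← sub_ne_zero, add_assoc a k 1]
  unfold cycleChromatic
  rw [pow_add_mul_pow_add_sub_pow_add_mul_pow_add]
  have h_base : (2 : ℚ) * -1 ≠ 0 := by norm_num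
  exact mul_ne_zero (mul_ne_zero (mul_ne_zero two_ne_zero (pow_ne_zero a h_base))
    (sub_ne_zero.mpr (two_pow_ne_neg_one_pow k.succ_ne_zero)))
    (sub_ne_zero.mpr (two_pow_ne_neg_one_pow m.succ_ne_zero))

theorem same_color_prob_injective_general (n : ℕ) (hn : 3 ≤ n) (d₁ d₂ : ℕ)
    (h₁' : d₁ ≤ n / 2) (h₂' : d₂ ≤ n / 2)
    (heq : ((2 : ℚ) ^ d₁ + 2 * (-1) ^ d₁) * ((2 : ℚ) ^ (n - d₁) + 2 * (-1) ^ (n - d₁))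
        / (3 * ((2 : ℚ) ^ n + 2 * (-1) ^ n))
      = ((2 : ℚ) ^ d₂ + 2 * (-1) ^ d₂) * ((2 : ℚ) ^ (n - d₂) + 2 * (-1) ^ (n - d₂))
        / (3 * ((2 : ℚ) ^ n + 2 * (-1) ^ n))) :
    d₁ = d₂ := by
  have h_denom : 3 * cycleChromatic n ≠ 0 :=
    mul_ne_zero three_ne_zero (cycleChromatic_ne_zero (by omega))
  have h_num : cycleChromatic d₁ * cycleChromatic (n - d₁)
      = cycleChromatic d₂ * cycleChromatic (n - d₂) := (div_left_inj' h_denom).mp heq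
  rcases lt_trichotomy d₁ d₂ with h | h | h
  · exact absurd h_num (cycleChromatic_mul_ne_of_lt h h₂')
  · exact h
  · exact absurd h_num.symm (cycleChromatic_mul_ne_of_lt h h₁')

/-- the probability f(d) that two vertices at distance d share a color in a
uniformly random proper 3-coloring of the n-cycle is injective on d ∈ {1, ..., ⌊n/2⌋}. -/
theorem same_color_prob_injective (n : ℕ) (hn : 3 ≤ n) (d₁ d₂ : ℕ)
    (h₁ : 1 ≤ d₁) (h₁' : d₁ ≤ n / 2) (h₂ : 1 ≤ d₂) (h₂' : d₂ ≤ n / 2)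
    (heq : ((2 : ℚ) ^ d₁ + 2 * (-1) ^ d₁) * ((2 : ℚ) ^ (n - d₁) + 2 * (-1) ^ (n - d₁))
        / (3 * ((2 : ℚ) ^ n + 2 * (-1) ^ n))
      = ((2 : ℚ) ^ d₂ + 2 * (-1) ^ d₂) * ((2 : ℚ) ^ (n - d₂) + 2 * (-1) ^ (n - d₂))
        / (3 * ((2 : ℚ) ^ n + 2 * (-1) ^ n))) :
    d₁ = d₂ :=
  same_color_prob_injective_general n hn d₁ d₂ h₁' h₂' heq
end

section
/- There is no probability distribution over proper 3-colorings of the 4-node cycle that is cyclic and independent beyond distance 1. More precisely: suppose Φ is a random proper 3-coloring of the cycle on vertices ℤ/4ℤ such that (i) Φ and Φ∘Prev have the same distribution (cyclicity, where Prev(v) = v-1), and (ii) for every vertex v, the colors Φ(v) and Φ(v+2) are independent random variables. Then a contradiction follows; no such Φ exists. -/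
/-!
Cyclicity makes all vertex marginals equal to one distribution `a` on the colours, and
independence then makes the colours of opposite vertices an `a ⊗ a` pair. A proper 3-colouring
of the 4-cycle repeats a colour on one of the two pairs of opposite vertices, so
`1 ≤ 2 ∑ σ, a σ ^ 2`. On the other hand, if vertex 1 has colour `ρ` then neither neighbour has,
so `a ρ ≤ (1 - a ρ) ^ 2`, which forces `a ρ ≤ 2 / 5` and hence `2 ∑ σ, a σ ^ 2 ≤ 4 / 5`.
-/

open Finset

section FiniteSums

variable {Ω : Type*} [Fintype Ω] {p : Ω → ℝ}

theorem sum_filter_le_sum_filter_of_imp (hp : ∀ ω, 0 ≤ p ω) {E F : Ω → Prop}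
    [DecidablePred E] [DecidablePred F] (h : ∀ ω, p ω ≠ 0 → E ω → F ω) :
    ∑ ω with E ω, p ω ≤ ∑ ω with F ω, p ω := by
  simp only [sum_filter]
  refine sum_le_sum fun ω _ => ?_
  split_ifs with hE hF hF
  · rfl
  · exact (not_not.1 fun hω => hF (h ω hω hE)).le
  · exact hp ω
  · rfl

theorem sum_filter_or {E F : Ω → Prop} [DecidablePred E] [DecidablePred F] :
    ∑ ω with E ω ∨ F ω, p ω
      = ∑ ω with E ω, p ω + ∑ ω with F ω, p ω - ∑ ω with E ω ∧ F ω, p ω := by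
  classical
  rw [eq_sub_iff_add_eq, filter_or, filter_and, sum_union_inter]

theorem sum_filter_not_eq_one_sub (hsum : ∑ ω, p ω = 1) {E : Ω → Prop} [DecidablePred E] :
    ∑ ω with ¬E ω, p ω = 1 - ∑ ω with E ω, p ω := by
  rw [← hsum, ← sum_filter_add_sum_filter_not univ E]
  ring

theorem sum_filter_eq_eq_sum {β : Type*} [Fintype β] [DecidableEq β] (X Y : Ω → β) :
    ∑ ω with X ω = Y ω, p ω = ∑ σ, ∑ ω with X ω = σ ∧ Y ω = σ, p ω := by
  rw [← sum_fiberwise _ X]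
  refine sum_congr rfl fun σ _ => ?_
  rw [filter_filter]
  refine sum_congr (filter_congr fun ω _ => ?_) fun _ _ => rfl
  constructor
  · rintro ⟨h, rfl⟩; exact ⟨rfl, h.symm⟩
  · rintro ⟨rfl, h⟩; exact ⟨h.symm, rfl⟩

end FiniteSums

section Rotation

variable {n : ℕ} [NeZero n] {α : Type*} [Fintype α] [DecidableEq α] {p : (ZMod n → α) → ℝ}

theorem sum_filter_apply_add_one_eq (hcyc : ∀ φ : ZMod n → α, p (fun v => φ (v - 1)) = p φ)
    (v : ZMod n) (σ : α) :
    ∑ φ with φ (v + 1) = σ, p φ = ∑ φ with φ v = σ, p φ := by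
  let rotate : (ZMod n → α) ≃ (ZMod n → α) :=
    ⟨fun φ w => φ (w - 1), fun φ w => φ (w + 1), fun φ => by simp, fun φ => by simp⟩
  simp only [sum_filter]
  rw [← rotate.sum_comp]
  refine sum_congr rfl fun φ _ => ?_
  simp [rotate, hcyc]

theorem sum_filter_apply_eq_apply_zero (hcyc : ∀ φ : ZMod n → α, p (fun v => φ (v - 1)) = p φ)
    (v : ZMod n) (σ : α) :
    ∑ φ with φ v = σ, p φ = ∑ φ with φ 0 = σ, p φ := by
  rw [← ZMod.natCast_zmod_val v]
  induction v.val with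
  | zero => rw [Nat.cast_zero]
  | succ k ih => rw [Nat.cast_succ, sum_filter_apply_add_one_eq hcyc, ih]

end Rotation

def IsProperColoring {n : ℕ} {α : Type*} (φ : ZMod n → α) : Prop := ∀ v, φ v ≠ φ (v + 1)

theorem IsProperColoring.apply_zero_eq_apply_two_or {φ : ZMod 4 → Fin 3}
    (hφ : IsProperColoring φ) : φ 0 = φ 2 ∨ φ 1 = φ 3 := by
  have key : ∀ x y z w : Fin 3, x ≠ y → y ≠ z → z ≠ w → w ≠ x → x = z ∨ y = w := by decide
  exact key _ _ _ _ (hφ 0) (hφ 1) (hφ 2) (hφ 3)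

section Cycle4

variable {p : (ZMod 4 → Fin 3) → ℝ}

theorem one_le_sum_filter_opposite_eq (hp : ∀ φ, 0 ≤ p φ) (hsum : ∑ φ, p φ = 1)
    (hproper : ∀ φ, p φ ≠ 0 → IsProperColoring φ) :
    1 ≤ ∑ φ with φ 0 = φ 2, p φ + ∑ φ with φ 1 = φ 3, p φ := by
  have hcover : ∑ φ with φ 0 = φ 2 ∨ φ 1 = φ 3, p φ = 1 := by
    rw [sum_filter_of_ne fun φ _ hφ => (hproper φ hφ).apply_zero_eq_apply_two_or, hsum]
  rw [← hcover, sum_filter_or, sub_le_self_iff]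
  exact sum_nonneg fun φ _ => hp φ

theorem sum_filter_apply_one_le_sum_filter_not_or (hp : ∀ φ, 0 ≤ p φ)
    (hproper : ∀ φ, p φ ≠ 0 → IsProperColoring φ) (ρ : Fin 3) :
    ∑ φ with φ 1 = ρ, p φ ≤ ∑ φ with ¬(φ 0 = ρ ∨ φ 2 = ρ), p φ := by
  refine sum_filter_le_sum_filter_of_imp hp fun φ hφ h1 h02 => ?_
  rcases h02 with h0 | h2
  · exact hproper φ hφ 0 (h0.trans h1.symm)
  · exact hproper φ hφ 1 (h1.trans h2.symm)

end Cycle4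

theorem le_two_fifths_of_le_one_sub_sq {x : ℝ} (h0 : 0 ≤ x) (h1 : x ≤ 1)
    (h : x ≤ (1 - x) ^ 2) : x ≤ 2 / 5 := by
  nlinarith

theorem two_mul_sum_sq_lt_one {ι : Type*} [Fintype ι] {a : ι → ℝ} (h0 : ∀ i, 0 ≤ a i)
    (h1 : ∑ i, a i = 1) (h : ∀ i, a i ≤ (1 - a i) ^ 2) : 2 * ∑ i, a i ^ 2 < 1 := by
  have hle : ∀ i, a i ≤ 2 / 5 := fun i =>
    le_two_fifths_of_le_one_sub_sq (h0 i) (h1 ▸ single_le_sum (fun j _ => h0 j) (mem_univ i)) (h i)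
  calc 2 * ∑ i, a i ^ 2 ≤ 2 * ∑ i, 2 / 5 * a i := by
        gcongr with i
        rw [sq]
        exact mul_le_mul_of_nonneg_right (hle i) (h0 i)
    _ = 4 / 5 := by rw [← mul_sum, h1]; norm_num
    _ < 1 := by norm_num

/-- there is no random proper 3-coloring of the 4-node cycle that is cyclic
and has Φ(v), Φ(v+2) independent for every v. -/
theorem no_perfect_independent_coloring_4cycle :
    ¬ ∃ p : (ZMod 4 → Fin 3) → ℝ,
      (∀ φ, 0 ≤ p φ) ∧
      (∑ φ : ZMod 4 → Fin 3, p φ = 1) ∧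
      (∀ φ, p φ ≠ 0 → ∀ v : ZMod 4, φ v ≠ φ (v + 1)) ∧
      (∀ φ : ZMod 4 → Fin 3, p (fun v => φ (v - 1)) = p φ) ∧
      (∀ (v : ZMod 4) (σ τ : Fin 3),
        (∑ φ ∈ Finset.univ.filter
            (fun φ : ZMod 4 → Fin 3 => φ v = σ ∧ φ (v + 2) = τ), p φ)
        = (∑ φ ∈ Finset.univ.filter (fun φ : ZMod 4 → Fin 3 => φ v = σ), p φ)
          * (∑ φ ∈ Finset.univ.filter (fun φ : ZMod 4 → Fin 3 => φ (v + 2) = τ), p φ)) := by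
  rintro ⟨p, hp, hsum, hproper, hcyc, hind⟩
  set a : Fin 3 → ℝ := fun σ => ∑ φ with φ 0 = σ, p φ
  have hmarg : ∀ v σ, ∑ φ with φ v = σ, p φ = a σ := sum_filter_apply_eq_apply_zero hcyc
  have hjoint : ∀ v σ τ, ∑ φ with φ v = σ ∧ φ (v + 2) = τ, p φ = a σ * a τ := fun v σ τ => by
    rw [hind, hmarg, hmarg]
  have hhalf : 1 ≤ 2 * ∑ σ, a σ ^ 2 := by
    have hdiag : ∀ v, ∑ φ with φ v = φ (v + 2), p φ = ∑ σ, a σ ^ 2 := fun v => by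
      simp only [sum_filter_eq_eq_sum, hjoint, sq]
    have h02 : ∑ φ with φ 0 = φ 2, p φ = ∑ σ, a σ ^ 2 := hdiag 0
    have h13 : ∑ φ with φ 1 = φ 3, p φ = ∑ σ, a σ ^ 2 := hdiag 1
    have h := one_le_sum_filter_opposite_eq hp hsum hproper
    rwa [h02, h13, ← two_mul] at h
  have hbound : ∀ ρ, a ρ ≤ (1 - a ρ) ^ 2 := fun ρ => by
    have h := sum_filter_apply_one_le_sum_filter_not_or hp hproper ρ
    have h02 : ∑ φ with φ 0 = ρ ∧ φ 2 = ρ, p φ = a ρ * a ρ := hjoint 0 ρ ρ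
    rw [sum_filter_not_eq_one_sub hsum, sum_filter_or, hmarg, hmarg, hmarg, h02] at h
    linear_combination h
  have ha_nonneg : ∀ σ, 0 ≤ a σ := fun σ => sum_nonneg fun φ _ => hp φ
  have ha_sum : ∑ σ, a σ = 1 := (sum_fiberwise _ _ p).trans hsum
  exact (two_mul_sum_sq_lt_one ha_nonneg ha_sum hbound).not_ge hhalf
end

section
/- Under the hypotheses of the 4-node ring impossibility argument, if Φ is a cyclic random proper 3-coloring of the 4-cycle with Φ(v) and Φ(v+2) independent, and r_σ = Pr[Φ(v) = σ] for each color σ, then for each color σ one has r_σ ≤ 1 - 1/√2. (This yields the contradiction r_0 + r_1 + r_2 ≤ 3(1 - 1/√2) < 1.) -/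
/-!
Fix a color σ and write r for the probability that a node has color σ; by cyclicity it is the same
at every node. In a proper coloring of the 4-cycle the nodes of color σ lie on a single diagonal,
so the events "σ occurs on {v, v+2}" and "σ occurs on {v+1, v+3}" are disjoint. By independence
of antipodal nodes each of them has probability 2r - r², hence 2(2r - r²) ≤ 1, i.e.
(1 - r)² ≥ 1/2, and r ≤ 1 gives r ≤ 1 - 1/√2.
-/

open Finset

section EventMass

variable {Ω : Type*} [Fintype Ω] {p : Ω → ℝ}

variable (p) in
def eventMass (P : Ω → Prop) [DecidablePred P] : ℝ :=
  ∑ ω ∈ univ.filter P, p ω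

theorem eventMass_le_one (hnonneg : ∀ ω, 0 ≤ p ω) (hsum : ∑ ω, p ω = 1)
    (P : Ω → Prop) [DecidablePred P] : eventMass p P ≤ 1 :=
  hsum ▸ sum_le_sum_of_subset_of_nonneg (subset_univ _) fun ω _ _ => hnonneg ω

theorem eventMass_or_add_eventMass_and [DecidableEq Ω]
    (P Q : Ω → Prop) [DecidablePred P] [DecidablePred Q] :
    eventMass p (fun ω => P ω ∨ Q ω) + eventMass p (fun ω => P ω ∧ Q ω)
      = eventMass p P + eventMass p Q := by
  rw [eventMass, eventMass, filter_or, filter_and, sum_union_inter]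
  rfl

theorem eventMass_eq_zero {P : Ω → Prop} [DecidablePred P] (h : ∀ ω, P ω → p ω = 0) :
    eventMass p P = 0 :=
  sum_eq_zero fun ω hω => h ω (mem_filter.1 hω).2

end EventMass

section Cyclic

variable {n : ℕ} {α : Type*} [Fintype α] [DecidableEq α] {p : (ZMod n → α) → ℝ}

theorem eventMass_apply_add_one [NeZero n]
    (hcyc : ∀ φ : ZMod n → α, p (fun v => φ (v - 1)) = p φ) (v : ZMod n) (σ : α) :
    eventMass p (fun φ => φ (v + 1) = σ) = eventMass p (fun φ => φ v = σ) := by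
  let shift : (ZMod n → α) ≃ (ZMod n → α) :=
    ⟨fun φ w => φ (w + 1), fun φ w => φ (w - 1), fun φ => by simp, fun φ => by simp⟩
  rw [eventMass, eventMass, sum_filter, sum_filter]
  refine Fintype.sum_equiv shift _ _ fun φ => ?_
  have := hcyc (shift φ)
  simp only [shift, Equiv.coe_fn_mk, sub_add_cancel] at this ⊢
  rw [this]

theorem eventMass_apply_eq_of_cyclic [NeZero n]
    (hcyc : ∀ φ : ZMod n → α, p (fun v => φ (v - 1)) = p φ) (v w : ZMod n) (σ : α) :
    eventMass p (fun φ => φ w = σ) = eventMass p (fun φ => φ v = σ) := by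
  obtain ⟨k, rfl⟩ : ∃ k : ℕ, w = v + k := ⟨(w - v).val, by simp⟩
  induction k with
  | zero => simp
  | succ k ih => rw [Nat.cast_succ, ← add_assoc, eventMass_apply_add_one hcyc, ih]

end Cyclic

theorem ZMod.not_color_on_both_diagonals {α : Type*} {φ : ZMod 4 → α}
    (hφ : ∀ v, φ v ≠ φ (v + 1)) (v : ZMod 4) (σ : α) :
    ¬((φ v = σ ∨ φ (v + 2) = σ) ∧ (φ (v + 1) = σ ∨ φ (v + 1 + 2) = σ)) := by
  rintro ⟨heven, hodd⟩
  have h2 : v + 1 + 1 = v + 2 := by ring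
  have h3 : v + 2 + 1 = v + 1 + 2 := by ring
  have h4 : v + 1 + 2 + 1 = v := by rw [add_assoc, add_assoc]; exact add_eq_left.mpr (by decide)
  rcases heven with h | h <;> rcases hodd with h' | h'
  · exact hφ v (h.trans h'.symm)
  · exact hφ (v + 1 + 2) (by rw [h4, h, h'])
  · exact hφ (v + 1) (by rw [h2, h, h'])
  · exact hφ (v + 2) (by rw [h3, h, h'])

theorem le_one_sub_one_div_sqrt_two {r : ℝ} (hr : r ≤ 1) (h : 2 * (2 * r - r ^ 2) ≤ 1) :
    r ≤ 1 - 1 / √2 := by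
  have hsq : 1 / 2 ≤ (1 - r) ^ 2 := by nlinarith
  have := Real.sqrt_le_sqrt hsq
  rw [Real.sqrt_sq (by linarith), one_div, Real.sqrt_inv] at this
  rw [one_div]
  linarith

/-- for any cyclic random proper 3-coloring of the 4-cycle with Φ(v) and
Φ(v+2) independent, each single-node color probability r_σ is at most 1 - 1/√2. -/
theorem marginal_bound_4cycle (p : (ZMod 4 → Fin 3) → ℝ)
    (hnonneg : ∀ φ, 0 ≤ p φ)
    (hsum : ∑ φ : ZMod 4 → Fin 3, p φ = 1)
    (hproper : ∀ φ, p φ ≠ 0 → ∀ v : ZMod 4, φ v ≠ φ (v + 1))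
    (hcyc : ∀ φ : ZMod 4 → Fin 3, p (fun v => φ (v - 1)) = p φ)
    (hind : ∀ (v : ZMod 4) (σ τ : Fin 3),
        (∑ φ ∈ Finset.univ.filter
            (fun φ : ZMod 4 → Fin 3 => φ v = σ ∧ φ (v + 2) = τ), p φ)
        = (∑ φ ∈ Finset.univ.filter (fun φ : ZMod 4 → Fin 3 => φ v = σ), p φ)
          * (∑ φ ∈ Finset.univ.filter (fun φ : ZMod 4 → Fin 3 => φ (v + 2) = τ), p φ)) :
    ∀ (v : ZMod 4) (σ : Fin 3),
      (∑ φ ∈ Finset.univ.filter (fun φ : ZMod 4 → Fin 3 => φ v = σ), p φ)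
        ≤ 1 - 1 / Real.sqrt 2 := by
  intro v σ
  show eventMass p (fun φ => φ v = σ) ≤ _
  obtain ⟨r, hr⟩ : ∃ r, eventMass p (fun φ => φ v = σ) = r := ⟨_, rfl⟩
  have hmarginal (w : ZMod 4) : eventMass p (fun φ => φ w = σ) = r :=
    (eventMass_apply_eq_of_cyclic hcyc v w σ).trans hr
  have hdiagonal (w : ZMod 4) :
      eventMass p (fun φ => φ w = σ ∨ φ (w + 2) = σ) = 2 * r - r ^ 2 := by
    have hincl := eventMass_or_add_eventMass_and (p := p)
      (fun φ => φ w = σ) (fun φ => φ (w + 2) = σ)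
    have hprod : eventMass p (fun φ => φ w = σ ∧ φ (w + 2) = σ) = r * r := by
      calc _ = eventMass p (fun φ => φ w = σ) * eventMass p (fun φ => φ (w + 2) = σ) :=
            hind w σ σ
        _ = r * r := by rw [hmarginal, hmarginal]
    rw [hprod, hmarginal, hmarginal] at hincl
    linarith
  have hdisjoint : eventMass p (fun φ => (φ v = σ ∨ φ (v + 2) = σ) ∧
      (φ (v + 1) = σ ∨ φ (v + 1 + 2) = σ)) = 0 :=
    eventMass_eq_zero fun φ hσ =>
      by_contra fun hφ => ZMod.not_color_on_both_diagonals (hproper φ hφ) v σ hσ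
  have hincl := eventMass_or_add_eventMass_and (p := p) (fun φ => φ v = σ ∨ φ (v + 2) = σ)
    (fun φ => φ (v + 1) = σ ∨ φ (v + 1 + 2) = σ)
  rw [hdisjoint, hdiagonal, hdiagonal] at hincl
  have hunion := eventMass_le_one hnonneg hsum
    (fun φ => (φ v = σ ∨ φ (v + 2) = σ) ∨ (φ (v + 1) = σ ∨ φ (v + 1 + 2) = σ))
  have hr_le : r ≤ 1 := hr ▸ eventMass_le_one hnonneg hsum _
  rw [hr]
  exact le_one_sub_one_div_sqrt_two hr_le (by linarith)
end

section
/- Let n, k, r be positive integers with k ≥ 2, and let q < 1. Suppose every random 3-coloring Ψ of a k-node line segment that is independent beyond distance r has success probability (probability of being a proper coloring) at most q. Then every random 3-coloring Φ of the n-node cycle that is independent beyond distance r has success probability at most q^⌊n/(k+r)⌋. -/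
/-- The set of nodes covered by the gap-`r` extension of a sliding frame of length `s`
placed at node `ω` of the `n`-cycle: nodes `ω - r, ..., ω + s - 1`. -/
def frameSet (n r : ℕ) (ω : ZMod n) (s : ℕ) : Finset (ZMod n) :=
  (Finset.range (s + r)).image (fun i : ℕ => ω + (i : ZMod n) - (r : ZMod n))

/-- `ω` is a gap-`r` placement of the collection of sliding frames with lengths `s`:
the gapped extensions of the frames are pairwise disjoint. -/
def IsPlacement (n r : ℕ) {t : ℕ} (s : Fin t → ℕ) (ω : Fin t → ZMod n) : Prop :=
  ∀ j j' : Fin t, j ≠ j' →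
    Disjoint (frameSet n r (ω j) (s j)) (frameSet n r (ω j') (s j'))

/-- The probability, under the random coloring with weights `P`, that the contents of the
frames of lengths `s` placed at `ω` equal the collection of tableaux `ζ`. -/
noncomputable def jointProb {n : ℕ} [NeZero n] {C : Type} [Fintype C] [DecidableEq C]
    (P : (ZMod n → C) → ℝ) {t : ℕ} (s : Fin t → ℕ) (ω : Fin t → ZMod n)
    (ζ : (j : Fin t) → Fin (s j) → C) : ℝ :=
  ∑ φ ∈ Finset.univ.filter
      (fun φ : ZMod n → C =>
        ∀ (j : Fin t) (i : Fin (s j)), φ (ω j + ((i : ℕ) : ZMod n)) = ζ j i),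
    P φ

/-- A random coloring is cyclic if its law is invariant under rotation. -/
def Cyclic {n : ℕ} {C : Type} (P : (ZMod n → C) → ℝ) : Prop :=
  ∀ φ : ZMod n → C, P (fun v => φ (v - 1)) = P φ

/-- A random coloring of the `n`-cycle is independent at distances beyond `r`. -/
def IndependentBeyond (n r : ℕ) [NeZero n] {C : Type} [Fintype C] [DecidableEq C]
    (P : (ZMod n → C) → ℝ) : Prop :=
  Cyclic P ∧ ∃ p : (s : ℕ) → (Fin s → C) → ℝ,
    (∀ s : ℕ, (∀ ζ, 0 ≤ p s ζ) ∧ ∑ ζ : Fin s → C, p s ζ = 1) ∧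
    ∀ (t : ℕ) (s : Fin t → ℕ) (ω : Fin t → ZMod n), IsPlacement n r s ω →
      ∀ ζ : (j : Fin t) → Fin (s j) → C,
        jointProb P s ω ζ = ∏ j : Fin t, p (s j) (ζ j)

/-- A random coloring of the `n`-cycle is non-signaling at distances beyond `r`. -/
def NonSignalingBeyond (n r : ℕ) [NeZero n] {C : Type} [Fintype C] [DecidableEq C]
    (P : (ZMod n → C) → ℝ) : Prop :=
  Cyclic P ∧
    ∀ (t : ℕ) (s : Fin t → ℕ) (ω ω' : Fin t → ZMod n),
      IsPlacement n r s ω → IsPlacement n r s ω' →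
      ∀ ζ : (j : Fin t) → Fin (s j) → C,
        jointProb P s ω ζ = jointProb P s ω' ζ

/-- The set of integer positions covered by the gap-`r` extension of a length-`s` frame
placed at position `ω` of a line segment: positions `ω - r, ..., ω + s - 1`. -/
noncomputable def segFrameSet (r ω s : ℕ) : Finset ℤ :=
  Finset.Ico ((ω : ℤ) - (r : ℤ)) ((ω : ℤ) + (s : ℤ))

/-- `ω` is a gap-`r` placement of frames of lengths `s` that respects a `k`-node segment:
each (ungapped) frame lies inside the segment and the gapped extensions are pairwise
disjoint. -/
def IsSegPlacement (k r : ℕ) {t : ℕ} (s : Fin t → ℕ) (ω : Fin t → ℕ) : Prop :=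
  (∀ j : Fin t, ω j + s j ≤ k) ∧
  ∀ j j' : Fin t, j ≠ j' →
    Disjoint (segFrameSet r (ω j) (s j)) (segFrameSet r (ω j') (s j'))

/-- The probability, under the random segment coloring with weights `Q`, that the contents
of the frames of lengths `s` placed at `ω` equal the collection of tableaux `ζ`. -/
noncomputable def segJointProb {k : ℕ} {C : Type} [Fintype C] [DecidableEq C]
    (Q : (Fin k → C) → ℝ) {t : ℕ} (s : Fin t → ℕ) (ω : Fin t → ℕ)
    (ζ : (j : Fin t) → Fin (s j) → C) : ℝ :=
  ∑ ψ ∈ Finset.univ.filter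
      (fun ψ : Fin k → C =>
        ∀ (j : Fin t) (i : Fin (s j)) (h : ω j + (i : ℕ) < k), ψ ⟨ω j + (i : ℕ), h⟩ = ζ j i),
    Q ψ

/-- A random coloring of a `k`-node line segment is independent at distances beyond `r`. -/
def SegIndependentBeyond (k r : ℕ) {C : Type} [Fintype C] [DecidableEq C]
    (Q : (Fin k → C) → ℝ) : Prop :=
  ∃ p : (s : ℕ) → (Fin s → C) → ℝ,
    (∀ s : ℕ, (∀ ζ, 0 ≤ p s ζ) ∧ ∑ ζ : Fin s → C, p s ζ = 1) ∧
    ∀ (t : ℕ) (s : Fin t → ℕ) (ω : Fin t → ℕ), IsSegPlacement k r s ω →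
      ∀ ζ : (j : Fin t) → Fin (s j) → C,
        segJointProb Q s ω ζ = ∏ j : Fin t, p (s j) (ζ j)

/-- A random coloring of a `k`-node line segment is non-signaling at distances beyond `r`. -/
def SegNonSignalingBeyond (k r : ℕ) {C : Type} [Fintype C] [DecidableEq C]
    (Q : (Fin k → C) → ℝ) : Prop :=
  ∀ (t : ℕ) (s : Fin t → ℕ) (ω ω' : Fin t → ℕ),
    IsSegPlacement k r s ω → IsSegPlacement k r s ω' →
    ∀ ζ : (j : Fin t) → Fin (s j) → C,
      segJointProb Q s ω ζ = segJointProb Q s ω' ζ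
/-!
The `m = ⌊n/(k+r)⌋` frames of length `k` at positions `j(k+r) + r` of the cycle have disjoint
gapped extensions, so under a coloring `P` independent beyond `r` their contents are independent,
each distributed as `p k`. A proper coloring of the cycle is proper on every frame, hence `P`
succeeds with probability at most `(p k)(proper)^m`. When `m ≥ 1` we have `k + r ≤ n`, so the
gapped segment frames embed into the cycle without wrapping around: `p k`, read as a random
coloring of the `k`-node segment, is then itself independent beyond `r` and `(p k)(proper) ≤ q`.
-/

open Finset

section Cycle

variable {n r : ℕ} {C : Type} [Fintype C] [DecidableEq C]

def frameContent (φ : ZMod n → C) (ω : ZMod n) (s : ℕ) : Fin s → C :=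
  fun i => φ (ω + ((i : ℕ) : ZMod n))

/-- The factorization clause of `IndependentBeyond`, for a fixed family `p` of frame laws. -/
def HasProductFrameLaws (n r : ℕ) [NeZero n] (P : (ZMod n → C) → ℝ)
    (p : (s : ℕ) → (Fin s → C) → ℝ) : Prop :=
  ∀ (t : ℕ) (s : Fin t → ℕ) (ω : Fin t → ZMod n), IsPlacement n r s ω →
    ∀ ζ : (j : Fin t) → Fin (s j) → C, jointProb P s ω ζ = ∏ j : Fin t, p (s j) (ζ j)

lemma exists_intCast_of_mem_frameSet {ω : ℤ} {s : ℕ} {x : ZMod n}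
    (hx : x ∈ frameSet n r (ω : ZMod n) s) : ∃ a ∈ Ico (ω - r) (ω + s), x = (a : ZMod n) := by
  obtain ⟨i, hi, rfl⟩ := mem_image.mp hx
  refine ⟨ω + i - r, mem_Ico.mpr ⟨by omega, by rw [mem_range] at hi; omega⟩, by push_cast; rfl⟩

lemma intCast_injOn_Ico (a : ℤ) : Set.InjOn (Int.cast : ℤ → ZMod n) (Set.Ico a (a + n)) := by
  intro x hx y hy hxy
  have hdvd := (ZMod.intCast_eq_intCast_iff_dvd_sub x y n).mp hxy
  have := Int.eq_zero_of_abs_lt_dvd hdvd (abs_sub_lt_iff.mpr ⟨by grind, by grind⟩)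
  omega

lemma isPlacement_intCast {t : ℕ} {s : Fin t → ℕ} {ω : Fin t → ℤ} (a : ℤ)
    (hwin : ∀ j, a ≤ ω j - r ∧ ω j + s j ≤ a + n)
    (hdisj : ∀ j j', j ≠ j' →
      Disjoint (Ico (ω j - r) (ω j + s j)) (Ico (ω j' - r) (ω j' + s j'))) :
    IsPlacement n r s (fun j => (ω j : ZMod n)) := by
  intro j j' hne
  rw [disjoint_left]
  intro x hx hx'
  obtain ⟨b, hb, rfl⟩ := exists_intCast_of_mem_frameSet hx
  obtain ⟨b', hb', hbb'⟩ := exists_intCast_of_mem_frameSet hx'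
  have hwin' : ∀ {j} {c : ℤ}, c ∈ Ico (ω j - r) (ω j + s j) → c ∈ Set.Ico a (a + n) :=
    fun {j} _ hc => by have := hwin j; rw [mem_Ico] at hc; exact ⟨by omega, by omega⟩
  have := intCast_injOn_Ico a (hwin' hb) (hwin' hb') hbb'
  exact disjoint_left.mp (hdisj j j' hne) hb (this ▸ hb')

lemma IsSegPlacement.isPlacement {k t : ℕ} {s : Fin t → ℕ} {ω : Fin t → ℕ}
    (h : IsSegPlacement k r s ω) (hkr : k + r ≤ n) :
    IsPlacement n r s (fun j => ((ω j : ℕ) : ZMod n)) := by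
  simpa only [Int.cast_natCast] using
    isPlacement_intCast (ω := fun j => (ω j : ℤ)) (-r) (fun j => by have := h.1 j; omega) h.2

lemma isPlacement_evenlySpaced {m k : ℕ} (hm : m * (k + r) ≤ n) :
    IsPlacement n r (fun _ : Fin m => k) (fun j => (((j : ℕ) * (k + r) + r : ℤ) : ZMod n)) := by
  have hm' : (m : ℤ) * (k + r) ≤ n := by exact_mod_cast hm
  refine isPlacement_intCast 0 (fun j => ⟨by rw [add_sub_cancel_right]; positivity, ?_⟩)
    fun j j' hne => ?_
  · have : ((j : ℕ) + 1 : ℤ) * (k + r) ≤ m * (k + r) := by gcongr; exact_mod_cast j.isLt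
    linarith
  · rw [disjoint_left]
    intro x hx hx'
    simp only [mem_Ico] at hx hx'
    rcases Fin.lt_or_lt_of_ne hne with hlt | hlt
    · have : ((j : ℕ) + 1 : ℤ) * (k + r) ≤ (j' : ℕ) * (k + r) := by gcongr; exact_mod_cast hlt
      linarith
    · have : ((j' : ℕ) + 1 : ℤ) * (k + r) ≤ (j : ℕ) * (k + r) := by gcongr; exact_mod_cast hlt
      linarith

def segProperColorings (k : ℕ) (C : Type) [Fintype C] [DecidableEq C] : Finset (Fin k → C) :=
  univ.filter fun ψ => ∀ (i : Fin k) (h : (i : ℕ) + 1 < k), ψ i ≠ ψ ⟨(i : ℕ) + 1, h⟩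

lemma frameContent_mem_segProperColorings {φ : ZMod n → C} (hφ : ∀ v, φ v ≠ φ (v + 1))
    (ω : ZMod n) (k : ℕ) : frameContent φ ω k ∈ segProperColorings k C := by
  simp only [segProperColorings, mem_filter, mem_univ, true_and, frameContent]
  intro i _
  push_cast
  rw [← add_assoc]
  exact hφ _

section Laws

variable [NeZero n] {P : (ZMod n → C) → ℝ}

lemma jointProb_eq_sum_filter {t : ℕ} (s : Fin t → ℕ) (ω : Fin t → ZMod n)
    (ζ : (j : Fin t) → Fin (s j) → C) :
    jointProb P s ω ζ
      = ∑ φ ∈ univ.filter (fun φ => (fun j => frameContent φ (ω j) (s j)) = ζ), P φ := by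
  refine sum_congr (filter_congr fun φ _ => ?_) fun _ _ => rfl
  simp only [funext_iff, frameContent]

variable {p : (s : ℕ) → (Fin s → C) → ℝ}

lemma HasProductFrameLaws.apply_eq_sum_filter (h : HasProductFrameLaws n r P p) (ω : ZMod n)
    (s : ℕ) (ψ : Fin s → C) :
    p s ψ = ∑ φ ∈ univ.filter (fun φ => frameContent φ ω s = ψ), P φ := by
  have := h 1 (fun _ => s) (fun _ => ω) (fun j j' hne => absurd (Subsingleton.elim j j') hne)
    (fun _ => ψ)
  rw [Fin.prod_univ_one, jointProb_eq_sum_filter] at this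
  rw [← this]
  exact sum_congr (filter_congr fun φ _ => Function.const_inj) fun _ _ => rfl

lemma HasProductFrameLaws.sum_filter_forall_mem (h : HasProductFrameLaws n r P p) {t : ℕ}
    {s : Fin t → ℕ} {ω : Fin t → ZMod n} (hω : IsPlacement n r s ω)
    (A : (j : Fin t) → Finset (Fin (s j) → C)) :
    ∑ φ ∈ univ.filter (fun φ => ∀ j, frameContent φ (ω j) (s j) ∈ A j), P φ
      = ∏ j, ∑ ψ ∈ A j, p (s j) ψ := by
  rw [prod_univ_sum]
  simp_rw [← h t s ω hω, jointProb_eq_sum_filter]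
  rw [sum_fiberwise_eq_sum_filter]
  simp only [Fintype.mem_piFinset]

lemma HasProductFrameLaws.segJointProb_eq (h : HasProductFrameLaws n r P p) {k t : ℕ}
    {s : Fin t → ℕ} {ω : Fin t → ℕ} (hω : ∀ j, ω j + s j ≤ k) (ζ : (j : Fin t) → Fin (s j) → C) :
    segJointProb (p k) s ω ζ = jointProb P s (fun j => ((ω j : ℕ) : ZMod n)) ζ := by
  rw [segJointProb, sum_congr rfl fun ψ _ => h.apply_eq_sum_filter 0 k ψ,
    sum_fiberwise_eq_sum_filter, jointProb_eq_sum_filter]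
  refine sum_congr (filter_congr fun φ _ => ?_) fun _ _ => rfl
  simp only [mem_filter, mem_univ, true_and, frameContent, zero_add, funext_iff]
  constructor
  · intro hφ j i
    rw [← hφ j i (by have := hω j; omega)]
    push_cast
    rfl
  · intro hφ j i _
    rw [← hφ j i]
    push_cast
    rfl

lemma HasProductFrameLaws.segIndependentBeyond (h : HasProductFrameLaws n r P p)
    (hp : ∀ s, (∀ ζ, 0 ≤ p s ζ) ∧ ∑ ζ : Fin s → C, p s ζ = 1) {k : ℕ} (hkr : k + r ≤ n) :
    SegIndependentBeyond k r (p k) :=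
  ⟨p, hp, fun _ _ _ hω ζ => (h.segJointProb_eq hω.1 ζ).trans (h _ _ _ (hω.isPlacement hkr) ζ)⟩

lemma HasProductFrameLaws.sum_filter_proper_le_pow (h : HasProductFrameLaws n r P p)
    (hP : ∀ φ, 0 ≤ P φ) {m k : ℕ} (hm : m * (k + r) ≤ n) :
    ∑ φ ∈ univ.filter (fun φ : ZMod n → C => ∀ v, φ v ≠ φ (v + 1)), P φ
      ≤ (∑ ψ ∈ segProperColorings k C, p k ψ) ^ m :=
  calc _ ≤ ∑ φ ∈ univ.filter (fun φ => ∀ j : Fin m,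
          frameContent φ (((j : ℕ) * (k + r) + r : ℤ) : ZMod n) k ∈ segProperColorings k C), P φ :=
        sum_le_sum_of_subset_of_nonneg
          (monotone_filter_right _ fun _ _ hφ _ => frameContent_mem_segProperColorings hφ _ _)
          fun φ _ _ => hP φ
    _ = _ := by
        rw [h.sum_filter_forall_mem (isPlacement_evenlySpaced hm), prod_const, card_univ,
          Fintype.card_fin]

end Laws

end Cycle

theorem segment_bound_to_exponential_bound_general
    (n k r : ℕ) [NeZero n]
    (q : ℝ)
    (hseg : ∀ Q : (Fin k → Fin 3) → ℝ,
      (∀ ψ, 0 ≤ Q ψ) → (∑ ψ : Fin k → Fin 3, Q ψ = 1) →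
      SegIndependentBeyond k r Q →
      (∑ ψ ∈ Finset.univ.filter
          (fun ψ : Fin k → Fin 3 =>
            ∀ (i : Fin k) (h : (i : ℕ) + 1 < k), ψ i ≠ ψ ⟨(i : ℕ) + 1, h⟩),
        Q ψ) ≤ q) :
    ∀ P : (ZMod n → Fin 3) → ℝ,
      (∀ φ, 0 ≤ P φ) → (∑ φ : ZMod n → Fin 3, P φ = 1) →
      IndependentBeyond n r P →
      (∑ φ ∈ Finset.univ.filter
          (fun φ : ZMod n → Fin 3 => ∀ v : ZMod n, φ v ≠ φ (v + 1)),
        P φ) ≤ q ^ (n / (k + r)) := by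
  rintro P hP0 - ⟨-, p, hp, hP : HasProductFrameLaws n r P p⟩
  calc _ ≤ (∑ ψ ∈ segProperColorings k (Fin 3), p k ψ) ^ (n / (k + r)) :=
        hP.sum_filter_proper_le_pow hP0 (Nat.div_mul_le_self n (k + r))
    _ ≤ q ^ (n / (k + r)) := by
        rcases Nat.eq_zero_or_pos (n / (k + r)) with hm | hm
        · rw [hm, pow_zero, pow_zero]
        · have hkr : k + r ≤ n := (Nat.div_pos_iff.mp hm).2
          exact pow_le_pow_left₀ (sum_nonneg fun ψ _ => (hp k).1 ψ)
            (hseg (p k) (hp k).1 (hp k).2 (hP.segIndependentBeyond hp hkr)) _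

/-- if every random 3-coloring of a k-node line segment that is independent
beyond distance r succeeds (is proper) with probability at most q < 1, then every random
3-coloring of the n-node cycle that is independent beyond distance r succeeds with
probability at most q^⌊n/(k+r)⌋. -/
theorem segment_bound_to_exponential_bound
    (n k r : ℕ) [NeZero n] (hn : 0 < n) (hk : 2 ≤ k) (hr : 0 < r)
    (q : ℝ) (hq : q < 1)
    (hseg : ∀ Q : (Fin k → Fin 3) → ℝ,
      (∀ ψ, 0 ≤ Q ψ) → (∑ ψ : Fin k → Fin 3, Q ψ = 1) →
      SegIndependentBeyond k r Q →
      (∑ ψ ∈ Finset.univ.filter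
          (fun ψ : Fin k → Fin 3 =>
            ∀ (i : Fin k) (h : (i : ℕ) + 1 < k), ψ i ≠ ψ ⟨(i : ℕ) + 1, h⟩),
        Q ψ) ≤ q) :
    ∀ P : (ZMod n → Fin 3) → ℝ,
      (∀ φ, 0 ≤ P φ) → (∑ φ : ZMod n → Fin 3, P φ = 1) →
      IndependentBeyond n r P →
      (∑ φ ∈ Finset.univ.filter
          (fun φ : ZMod n → Fin 3 => ∀ v : ZMod n, φ v ≠ φ (v + 1)),
        P φ) ≤ q ^ (n / (k + r)) :=
  segment_bound_to_exponential_bound_general n k r q hseg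
end

section
/- Let n = 11, and for a coloring φ of the 11-node cycle define β_{φ,d} = (1/11)·|{v ∈ ℤ/11ℤ : φ(v) = φ(v+d)}|. Set p = (30/41, 11/41, 0, 0) and p' = (0, 0, 14/41, 27/41) as distributions over distances d = 2, 3, 4, 5. Then for every proper 3-coloring φ of the 11-node cycle, (p - p')·(β_{φ,2}, β_{φ,3}, β_{φ,4}, β_{φ,5}) ≥ 1/451. -/
/-!
Read the colours as elements of `ℤ/3` (which is what `Fin 3` arithmetic does). The steps
`Δ φ v = φ (v + 1) - φ v` of a proper colouring are nonzero, i.e. each is `1` or `2`, they sum to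
zero around the cycle, and `φ v = φ (v + d)` exactly when the `d` steps starting at `v` sum to
zero. After clearing the denominator `451 = 41 · 11` the inequality therefore only depends on a
cyclic word in `{1, 2}` of length 11, and the `2 ^ 11` such words are checked by evaluation.
-/

open Finset fwdDiff

section Telescoping

variable {G : Type*} [AddCommGroup G]

theorem sub_eq_sum_range_fwdDiff {M : Type*} [AddCommMonoid M] (h : M) (f : M → G) (y : M)
    (n : ℕ) :
    f (y + n • h) - f y = ∑ i ∈ range n, Δ_[h] f (y + i • h) := by
  simpa only [fwdDiff, succ_nsmul, add_assoc, zero_smul, add_zero]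
    using (sum_range_sub (fun i => f (y + i • h)) n).symm

theorem sum_fwdDiff_eq_zero {M : Type*} [AddCommGroup M] [Fintype M] (h : M) (f : M → G) :
    ∑ y, Δ_[h] f y = 0 := by
  simp only [fwdDiff, sum_sub_distrib, sub_eq_zero]
  exact Fintype.sum_equiv (Equiv.addRight h) _ _ fun _ => rfl

end Telescoping

def zeroWindowCount {M G : Type*} [AddMonoidWithOne M] [Fintype M] [AddCommMonoid G]
    [DecidableEq G] (s : M → G) (d : ℕ) : ℕ :=
  #{v | ∑ i ∈ range d, s (v + i) = 0}

theorem card_filter_eq_add_eq_zeroWindowCount {M G : Type*} [AddCommMonoidWithOne M] [Fintype M]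
    [AddCommGroup G] [DecidableEq G] (f : M → G) (d : ℕ) :
    #{v | f v = f (v + d)} = zeroWindowCount (Δ_[1] f) d := by
  refine congrArg card (filter_congr fun v _ => ?_)
  have telescope := sub_eq_sum_range_fwdDiff 1 f v d
  simp only [nsmul_one] at telescope
  rw [← telescope, sub_eq_zero, eq_comm]

theorem exists_eq_succ_comp_of_ne_zero {α : Type*} {n : ℕ} {s : α → Fin (n + 1)}
    (hs : ∀ a, s a ≠ 0) : ∃ b : α → Fin n, s = Fin.succ ∘ b := by
  choose b hb using fun a => Fin.exists_succ_eq.mpr (hs a)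
  exact ⟨b, funext fun a => (hb a).symm⟩

theorem zeroWindowCount_lt_of_succ_comp :
    ∀ b : ZMod 11 → Fin 2, ∑ v, (b v).succ = 0 →
      14 * zeroWindowCount (Fin.succ ∘ b) 4 + 27 * zeroWindowCount (Fin.succ ∘ b) 5 <
        30 * zeroWindowCount (Fin.succ ∘ b) 2 + 11 * zeroWindowCount (Fin.succ ∘ b) 3 := by
  decide +kernel

theorem zeroWindowCount_lt_of_ne_zero {s : ZMod 11 → Fin 3} (hs : ∀ v, s v ≠ 0)
    (hsum : ∑ v, s v = 0) :
    14 * zeroWindowCount s 4 + 27 * zeroWindowCount s 5 <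
      30 * zeroWindowCount s 2 + 11 * zeroWindowCount s 3 := by
  obtain ⟨b, rfl⟩ := exists_eq_succ_comp_of_ne_zero hs
  exact zeroWindowCount_lt_of_succ_comp b hsum

/-- for every proper 3-coloring φ of the 11-node cycle, with
β_{φ,d} the fraction of vertices v with φ(v) = φ(v+d), one has
(30/41)β₂ + (11/41)β₃ - (14/41)β₄ - (27/41)β₅ ≥ 1/451. -/
theorem eleven_cycle_bias (φ : ZMod 11 → Fin 3)
    (hproper : ∀ v : ZMod 11, φ v ≠ φ (v + 1)) :
    (1 : ℚ) / 451 ≤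
      (30 / 41) * (((Finset.univ.filter (fun v : ZMod 11 => φ v = φ (v + 2))).card : ℚ) / 11)
      + (11 / 41) * (((Finset.univ.filter (fun v : ZMod 11 => φ v = φ (v + 3))).card : ℚ) / 11)
      - (14 / 41) * (((Finset.univ.filter (fun v : ZMod 11 => φ v = φ (v + 4))).card : ℚ) / 11)
      - (27 / 41) * (((Finset.univ.filter (fun v : ZMod 11 => φ v = φ (v + 5))).card : ℚ) / 11) := by
  have hstep : ∀ v, Δ_[1] φ v ≠ 0 := fun v => sub_ne_zero.mpr (hproper v).symm
  have key := zeroWindowCount_lt_of_ne_zero hstep (sum_fwdDiff_eq_zero 1 φ)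
  simp only [← card_filter_eq_add_eq_zeroWindowCount, Nat.cast_ofNat] at key
  rw [← Nat.add_one_le_iff] at key
  qify at key
  linarith
end

section
/- Let Φ be a random 3-coloring of the 11-node cycle that is non-signaling beyond distance 1, and suppose Φ is proper with probability 1. Then a contradiction follows: no such Φ exists. (Consequently no quantum single-round one-way distributed algorithm perfectly 3-colors the 11-node ring.) -/
/-!
Under non-signaling beyond distance 1, the probability that nodes `v` and `v + d` get the same
color does not depend on `v` or on `d ∉ {-1, 0, 1}`: both pairs are gap-1 placements of two
frames of length 1. Hence the expected number `E d` of monochromatic pairs at distance `d` is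
the same for `d = 2, 3, 4, 5`. On the other hand every proper 3-coloring of the 11-cycle
satisfies `30 N₂ + 11 N₃ - 14 N₄ - 27 N₅ ≥ 1`, where `N_d` counts its monochromatic pairs at
distance `d` (the weights are `41 (p - p')` for `p = (30, 11, 0, 0) / 41`,
`p' = (0, 0, 14, 27) / 41`). Taking expectations gives `1 ≤ (30 + 11 - 14 - 27) E 2 = 0`.
-/

open Finset

section Agreement

variable {n : ℕ} [NeZero n] {C : Type} [Fintype C] [DecidableEq C]

def agreementCount (φ : ZMod n → C) (d : ZMod n) : ℕ :=
  #{v | φ v = φ (v + d)}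

noncomputable def agreementProb (P : (ZMod n → C) → ℝ) (v w : ZMod n) : ℝ :=
  ∑ φ with φ v = φ w, P φ

omit [NeZero n] in
lemma frameSet_one_one (v : ZMod n) : frameSet n 1 v 1 = {v - 1, v} := by
  simp [frameSet, range_add_one, image_insert, pair_comm]

omit [NeZero n] in
lemma isPlacement_pair (v d : ZMod n) (hd : d ∉ ({-1, 0, 1} : Finset (ZMod n))) :
    IsPlacement n 1 (fun _ : Fin 2 => 1) ![v, v + d] := by
  have hdisj : Disjoint (frameSet n 1 v 1) (frameSet n 1 (v + d) 1) := by
    simp only [frameSet_one_one, disjoint_insert_left, disjoint_insert_right, disjoint_singleton,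
      mem_insert, mem_singleton, not_or] at hd ⊢
    grind
  intro j j' hne
  fin_cases j <;> fin_cases j' <;> simp_all [disjoint_comm]

lemma jointProb_pair_const (P : (ZMod n → C) → ℝ) (v w : ZMod n) (c : C) :
    jointProb P (fun _ : Fin 2 => 1) ![v, w] (fun _ _ => c) = ∑ φ with φ v = c ∧ φ w = c, P φ := by
  simp [jointProb, Fin.forall_fin_two]

lemma sum_jointProb_pair (P : (ZMod n → C) → ℝ) (v w : ZMod n) :
    ∑ c, jointProb P (fun _ : Fin 2 => 1) ![v, w] (fun _ _ => c) = agreementProb P v w := by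
  rw [agreementProb, ← sum_fiberwise _ (fun φ : ZMod n → C => φ v) P]
  refine sum_congr rfl fun c _ => ?_
  rw [jointProb_pair_const, filter_filter]
  exact sum_congr (filter_congr fun φ _ => by grind) fun _ _ => rfl

lemma sum_mul_agreementCount (P : (ZMod n → C) → ℝ) (d : ZMod n) :
    ∑ φ, P φ * agreementCount φ d = ∑ v, agreementProb P v (v + d) := by
  simp only [agreementCount, agreementProb, card_filter, Nat.cast_sum, mul_sum, sum_filter]
  rw [sum_comm]
  simp

lemma NonSignalingBeyond.agreementProb_eq {P : (ZMod n → C) → ℝ} (hns : NonSignalingBeyond n 1 P)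
    {d d' : ZMod n} (hd : d ∉ ({-1, 0, 1} : Finset (ZMod n)))
    (hd' : d' ∉ ({-1, 0, 1} : Finset (ZMod n))) (v v' : ZMod n) :
    agreementProb P v (v + d) = agreementProb P v' (v' + d') := by
  rw [← sum_jointProb_pair, ← sum_jointProb_pair]
  exact sum_congr rfl fun c _ =>
    hns.2 2 _ _ _ (isPlacement_pair v d hd) (isPlacement_pair v' d' hd') _

lemma NonSignalingBeyond.sum_mul_agreementCount_eq {P : (ZMod n → C) → ℝ}
    (hns : NonSignalingBeyond n 1 P) {d d' : ZMod n} (hd : d ∉ ({-1, 0, 1} : Finset (ZMod n)))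
    (hd' : d' ∉ ({-1, 0, 1} : Finset (ZMod n))) :
    ∑ φ, P φ * agreementCount φ d = ∑ φ, P φ * agreementCount φ d' := by
  simp only [sum_mul_agreementCount]
  exact sum_congr rfl fun v _ => hns.agreementProb_eq hd hd' v v

end Agreement

lemma ZMod.sum_univ_eleven {M : Type*} [AddCommMonoid M] (g : ZMod 11 → M) :
    ∑ v, g v = g 0 + g 1 + g 2 + g 3 + g 4 + g 5 + g 6 + g 7 + g 8 + g 9 + g 10 := by
  have h (f : Fin 11 → M) :
      ∑ i, f i = f 0 + f 1 + f 2 + f 3 + f 4 + f 5 + f 6 + f 7 + f 8 + f 9 + f 10 := by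
    simp [Fin.sum_univ_succ, add_assoc]
  exact h g

def agreeIndicator {C : Type} [DecidableEq C] (x y : C) : ℕ := if x = y then 1 else 0

-- The properness constraints are interleaved with the quantifiers so that `decide` prunes
-- improper partial colorings early; only the 2046 proper colorings are fully evaluated.
set_option maxRecDepth 20000 in
theorem agreeIndicator_certificate :
    ∀ c0 c1 : Fin 3, c0 ≠ c1 → ∀ c2, c1 ≠ c2 → ∀ c3, c2 ≠ c3 → ∀ c4, c3 ≠ c4 →
    ∀ c5, c4 ≠ c5 → ∀ c6, c5 ≠ c6 → ∀ c7, c6 ≠ c7 → ∀ c8, c7 ≠ c8 → ∀ c9, c8 ≠ c9 →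
    ∀ c10, c9 ≠ c10 → c10 ≠ c0 →
    14 * (agreeIndicator c0 c4 + agreeIndicator c1 c5 + agreeIndicator c2 c6 +
        agreeIndicator c3 c7 + agreeIndicator c4 c8 + agreeIndicator c5 c9 +
        agreeIndicator c6 c10 + agreeIndicator c7 c0 + agreeIndicator c8 c1 +
        agreeIndicator c9 c2 + agreeIndicator c10 c3) +
      27 * (agreeIndicator c0 c5 + agreeIndicator c1 c6 + agreeIndicator c2 c7 +
        agreeIndicator c3 c8 + agreeIndicator c4 c9 + agreeIndicator c5 c10 +
        agreeIndicator c6 c0 + agreeIndicator c7 c1 + agreeIndicator c8 c2 +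
        agreeIndicator c9 c3 + agreeIndicator c10 c4) + 1 ≤
    30 * (agreeIndicator c0 c2 + agreeIndicator c1 c3 + agreeIndicator c2 c4 +
        agreeIndicator c3 c5 + agreeIndicator c4 c6 + agreeIndicator c5 c7 +
        agreeIndicator c6 c8 + agreeIndicator c7 c9 + agreeIndicator c8 c10 +
        agreeIndicator c9 c0 + agreeIndicator c10 c1) +
      11 * (agreeIndicator c0 c3 + agreeIndicator c1 c4 + agreeIndicator c2 c5 +
        agreeIndicator c3 c6 + agreeIndicator c4 c7 + agreeIndicator c5 c8 +
        agreeIndicator c6 c9 + agreeIndicator c7 c10 + agreeIndicator c8 c0 +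
        agreeIndicator c9 c1 + agreeIndicator c10 c2) := by
  decide

lemma agreementCount_certificate (φ : ZMod 11 → Fin 3) (hφ : ∀ v, φ v ≠ φ (v + 1)) :
    14 * agreementCount φ 4 + 27 * agreementCount φ 5 + 1 ≤
      30 * agreementCount φ 2 + 11 * agreementCount φ 3 := by
  have hcount (d : ZMod 11) : agreementCount φ d = ∑ v, agreeIndicator (φ v) (φ (v + d)) :=
    card_filter _ _
  simp only [hcount, ZMod.sum_univ_eleven]
  exact agreeIndicator_certificate (φ 0) (φ 1) (hφ 0) (φ 2) (hφ 1) (φ 3) (hφ 2)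
    (φ 4) (hφ 3) (φ 5) (hφ 4) (φ 6) (hφ 5) (φ 7) (hφ 6) (φ 8) (hφ 7) (φ 9) (hφ 8) (φ 10) (hφ 9)
    (hφ 10)

/-- there is no random 3-coloring of the 11-node cycle that is non-signaling
beyond distance 1 and proper with probability 1. -/
theorem no_perfect_nonsignaling_coloring_11cycle
    (P : (ZMod 11 → Fin 3) → ℝ)
    (hnonneg : ∀ φ, 0 ≤ P φ) (hsum : ∑ φ : ZMod 11 → Fin 3, P φ = 1)
    (hns : NonSignalingBeyond 11 1 P)
    (hproper : ∀ φ, P φ ≠ 0 → ∀ v : ZMod 11, φ v ≠ φ (v + 1)) :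
    False := by
  have hE (d : ZMod 11) (hd : d ∉ ({-1, 0, 1} : Finset (ZMod 11))) :
      ∑ φ, P φ * agreementCount φ d = ∑ φ, P φ * agreementCount φ 2 :=
    hns.sum_mul_agreementCount_eq hd (by decide)
  have hpointwise (φ : ZMod 11 → Fin 3) :
      P φ ≤ P φ * (30 * agreementCount φ 2 + 11 * agreementCount φ 3
        - 14 * agreementCount φ 4 - 27 * agreementCount φ 5 : ℝ) := by
    rcases eq_or_ne (P φ) 0 with hP | hP
    · simp [hP]
    · have h : (14 * agreementCount φ 4 + 27 * agreementCount φ 5 + 1 : ℝ) ≤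
          30 * agreementCount φ 2 + 11 * agreementCount φ 3 := by
        exact_mod_cast agreementCount_certificate φ (hproper φ hP)
      nlinarith [hnonneg φ]
  have hsum_le := sum_le_sum (s := univ) fun φ _ => hpointwise φ
  simp only [hsum, mul_sub, mul_add, sum_sub_distrib, sum_add_distrib,
    mul_left_comm (P _), ← mul_sum] at hsum_le
  linarith [hE 3 (by decide), hE 4 (by decide), hE 5 (by decide)]
end
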